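/- Let f(X) > 0 be a weight function, τ(X) a fixed measurable function, and suppose ρ(Z) and φ(Z) are random variables satisfying (i) E[ρ(Z) | X] = f(X), and (ii) E[ρ(Z)·(φ(Z) − τ(X))·g(X)] = 0 for all g in a class 𝒢 closed under the relevant operations. Then the weighted orthogonal loss L(g) = E[ρ(Z)(φ(Z) − g(X))²] decomposes as L(g) = E[ρ(Z)(φ(Z) − τ(X))²] + 2E[ρ(Z)(φ(Z) − τ(X))τ(X)] + E[f(X)(τ(X) − g(X))²], so its minimizer over 𝒢 coincides with the minimizer of the weighted oracle loss E[f(X)(τ(X) − g(X))²]. -/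

import Mathlib

open Finset
open scoped Classical

/-- Probability of an event under weights `w` on a finite sample space. -/
noncomputable def Pr {Ω : Type*} [Fintype Ω] (w : Ω → ℝ) (E : Ω → Prop) : ℝ :=
  ∑ ω : Ω, if E ω then w ω else 0

/-!
Expanding `(φ - g)² = (φ - τ)² + 2(φ - τ)τ - 2(φ - τ)g + (τ - g)²` under `E[ρ · _]`, the
third term vanishes by orthogonality and, by the tower property `E[ρ h(X)] = E[f(X) h(X)]`,
the last one is the oracle loss. The orthogonal loss is therefore the oracle loss plus a
constant independent of `g`, so both have the same minimizers.
-/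

section FiniteExpectation

variable {Ω 𝒳 : Type*} [Fintype Ω] (w : Ω → ℝ) (X : Ω → 𝒳)

theorem sum_mul_comp_eq_sum_fiber [Fintype 𝒳] (ρ : Ω → ℝ) (h : 𝒳 → ℝ) :
    ∑ ω, w ω * (ρ ω * h (X ω)) = ∑ x, (∑ ω, if X ω = x then w ω * ρ ω else 0) * h x := by
  simp only [sum_mul, ite_mul, zero_mul]
  rw [sum_comm]
  refine sum_congr rfl fun ω _ => ?_
  rw [sum_ite_eq univ (X ω) (fun x => w ω * ρ ω * h x), if_pos (mem_univ _), mul_assoc]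

theorem sum_fiber_comp_eq_mul_Pr (f : 𝒳 → ℝ) (x : 𝒳) :
    (∑ ω, if X ω = x then w ω * f (X ω) else 0) = f x * Pr w (fun ω => X ω = x) := by
  rw [Pr, mul_sum]
  refine sum_congr rfl fun ω _ => ?_
  split_ifs with hx
  · rw [hx, mul_comm]
  · rw [mul_zero]

theorem sum_mul_comp_eq_of_condExp_eq [Fintype 𝒳] {ρ : Ω → ℝ} {f : 𝒳 → ℝ}
    (hcond : ∀ x, (∑ ω, if X ω = x then w ω * ρ ω else 0) = f x * Pr w (fun ω => X ω = x))
    (h : 𝒳 → ℝ) :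
    ∑ ω, w ω * (ρ ω * h (X ω)) = ∑ ω, w ω * (f (X ω) * h (X ω)) := by
  simp only [sum_mul_comp_eq_sum_fiber w X _ h, hcond, sum_fiber_comp_eq_mul_Pr]

theorem orthogonal_loss_eq [Fintype 𝒳] {ρ φ : Ω → ℝ} {f τ : 𝒳 → ℝ}
    (hcond : ∀ x, (∑ ω, if X ω = x then w ω * ρ ω else 0) = f x * Pr w (fun ω => X ω = x))
    {g : 𝒳 → ℝ} (horth : ∑ ω, w ω * (ρ ω * (φ ω - τ (X ω)) * g (X ω)) = 0) :
    ∑ ω, w ω * (ρ ω * (φ ω - g (X ω)) ^ 2)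
      = ∑ ω, w ω * (ρ ω * (φ ω - τ (X ω)) ^ 2)
        + 2 * ∑ ω, w ω * (ρ ω * (φ ω - τ (X ω)) * τ (X ω))
        + ∑ ω, w ω * (f (X ω) * (τ (X ω) - g (X ω)) ^ 2) := by
  have expand : ∑ ω, w ω * (ρ ω * (φ ω - g (X ω)) ^ 2)
      = ∑ ω, (w ω * (ρ ω * (φ ω - τ (X ω)) ^ 2)
          + 2 * (w ω * (ρ ω * (φ ω - τ (X ω)) * τ (X ω)))
          - 2 * (w ω * (ρ ω * (φ ω - τ (X ω)) * g (X ω)))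
          + w ω * (ρ ω * (τ (X ω) - g (X ω)) ^ 2)) :=
    sum_congr rfl fun ω _ => by ring
  rw [expand]
  simp only [sum_add_distrib, sum_sub_distrib, ← mul_sum]
  rw [horth, sum_mul_comp_eq_of_condExp_eq w X hcond (fun x => (τ x - g x) ^ 2)]
  ring

end FiniteExpectation

theorem forall_le_iff_of_eq_const_add {α : Type*} {s : Set α} {L O : α → ℝ} (c : ℝ)
    (h : ∀ g ∈ s, L g = c + O g) {a : α} (ha : a ∈ s) :
    (∀ g ∈ s, L a ≤ L g) ↔ ∀ g ∈ s, O a ≤ O g := by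
  refine forall₂_congr fun g hg => ?_
  rw [h a ha, h g hg, add_le_add_iff_left]

theorem orthogonal_loss_decomposition_general
    {Ω 𝒳 : Type*} [Fintype Ω] [Fintype 𝒳]
    (w : Ω → ℝ)
    (X : Ω → 𝒳)
    (f : 𝒳 → ℝ)
    (τ : 𝒳 → ℝ) (ρ φ : Ω → ℝ)
    (𝒢 : Set (𝒳 → ℝ))
    -- (i) E[ρ | X] = f(X) almost surely
    (hcond : ∀ x : 𝒳, (∑ ω : Ω, if X ω = x then w ω * ρ ω else 0)
        = f x * Pr w (fun ω => X ω = x))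
    -- (ii) E[ρ(φ − τ(X)) g(X)] = 0 for all g ∈ 𝒢
    (horth : ∀ g ∈ 𝒢,
      (∑ ω : Ω, w ω * (ρ ω * (φ ω - τ (X ω)) * g (X ω))) = 0) :
    (∀ g ∈ 𝒢,
      (∑ ω : Ω, w ω * (ρ ω * (φ ω - g (X ω)) ^ 2))
        = (∑ ω : Ω, w ω * (ρ ω * (φ ω - τ (X ω)) ^ 2))
          + 2 * (∑ ω : Ω, w ω * (ρ ω * (φ ω - τ (X ω)) * τ (X ω)))
          + (∑ ω : Ω, w ω * (f (X ω) * (τ (X ω) - g (X ω)) ^ 2)))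
    ∧ ∀ gstar ∈ 𝒢,
      ((∀ g ∈ 𝒢, (∑ ω : Ω, w ω * (ρ ω * (φ ω - gstar (X ω)) ^ 2))
            ≤ (∑ ω : Ω, w ω * (ρ ω * (φ ω - g (X ω)) ^ 2)))
        ↔ (∀ g ∈ 𝒢, (∑ ω : Ω, w ω * (f (X ω) * (τ (X ω) - gstar (X ω)) ^ 2))
            ≤ (∑ ω : Ω, w ω * (f (X ω) * (τ (X ω) - g (X ω)) ^ 2)))) := by
  have decomp := fun g hg => orthogonal_loss_eq w X hcond (horth g hg)
  exact ⟨decomp, fun gstar hgstar => forall_le_iff_of_eq_const_add _ decomp hgstar⟩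

/-- If `E[ρ | X] = f(X)` and `E[ρ(φ − τ(X)) g(X)] = 0` for all `g ∈ 𝒢`, then the
weighted orthogonal loss decomposes as
`E[ρ(φ − g(X))²] = E[ρ(φ − τ(X))²] + 2E[ρ(φ − τ(X))τ(X)] + E[f(X)(τ(X) − g(X))²]`,
so a `g* ∈ 𝒢` minimizes it over `𝒢` iff it minimizes the weighted oracle loss
`E[f(X)(τ(X) − g(X))²]`. -/
theorem orthogonal_loss_decomposition
    {Ω 𝒳 : Type*} [Fintype Ω] [Fintype 𝒳]
    (w : Ω → ℝ) (hw : ∀ ω, 0 ≤ w ω) (hsum : ∑ ω : Ω, w ω = 1)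
    (X : Ω → 𝒳)
    (f : 𝒳 → ℝ) (hf : ∀ x, 0 < f x)
    (τ : 𝒳 → ℝ) (ρ φ : Ω → ℝ)
    (𝒢 : Set (𝒳 → ℝ))
    -- (i) E[ρ | X] = f(X) almost surely
    (hcond : ∀ x : 𝒳, (∑ ω : Ω, if X ω = x then w ω * ρ ω else 0)
        = f x * Pr w (fun ω => X ω = x))
    -- (ii) E[ρ(φ − τ(X)) g(X)] = 0 for all g ∈ 𝒢
    (horth : ∀ g ∈ 𝒢,
      (∑ ω : Ω, w ω * (ρ ω * (φ ω - τ (X ω)) * g (X ω))) = 0) :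
    (∀ g ∈ 𝒢,
      (∑ ω : Ω, w ω * (ρ ω * (φ ω - g (X ω)) ^ 2))
        = (∑ ω : Ω, w ω * (ρ ω * (φ ω - τ (X ω)) ^ 2))
          + 2 * (∑ ω : Ω, w ω * (ρ ω * (φ ω - τ (X ω)) * τ (X ω)))
          + (∑ ω : Ω, w ω * (f (X ω) * (τ (X ω) - g (X ω)) ^ 2)))
    ∧ ∀ gstar ∈ 𝒢,
      ((∀ g ∈ 𝒢, (∑ ω : Ω, w ω * (ρ ω * (φ ω - gstar (X ω)) ^ 2))
            ≤ (∑ ω : Ω, w ω * (ρ ω * (φ ω - g (X ω)) ^ 2)))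
        ↔ (∀ g ∈ 𝒢, (∑ ω : Ω, w ω * (f (X ω) * (τ (X ω) - gstar (X ω)) ^ 2))
            ≤ (∑ ω : Ω, w ω * (f (X ω) * (τ (X ω) - g (X ω)) ^ 2)))) :=
  orthogonal_loss_decomposition_general w X f τ ρ φ 𝒢 hcond horth
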